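/- Let L be a countable relational first-order language and let K be a nonempty strong Fraïssé class of finite (equivalently, finitely generated) L-structures with only countably many members up to isomorphism, and let M be the countable ultrahomogeneous L-structure whose age is K. Define a ≡ b for a, b ∈ M iff a and b satisfy the same atomic formulas with all parameter tuples from M. Then every ≡-equivalence class of M has either exactly one element or is infinite. -/

import Mathlib

open FirstOrder FirstOrder.Language Set Cardinal

universe u

/-- `a ≡ b` : `a` and `b` satisfy the same atomic formulas with arbitrary parameter tuples. -/
def AtomEquiv (L : FirstOrder.Language.{u, u}) (M : Type u) [L.Structure M] (a b : M) : Prop :=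
  ∀ (n : ℕ) (φ : L.Formula (Fin (n + 1))), φ.IsAtomic →
    ∀ c : Fin n → M, (φ.Realize (Fin.cons a c) ↔ φ.Realize (Fin.cons b c))

/-- A class of structures has the strong amalgamation property if any two embeddings
between members have an amalgam whose images intersect exactly in the image of the base. -/
def StrongAmalgamation {L : FirstOrder.Language.{u, u}}
    (K : Set (CategoryTheory.Bundled.{u} L.Structure)) : Prop :=
  ∀ (A B C : CategoryTheory.Bundled.{u} L.Structure) (i₁ : A ↪[L] B) (i₂ : A ↪[L] C),
    A ∈ K → B ∈ K → C ∈ K →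
      ∃ (D : CategoryTheory.Bundled.{u} L.Structure) (j₁ : B ↪[L] D) (j₂ : C ↪[L] D),
        D ∈ K ∧ j₁.comp i₁ = j₂.comp i₂ ∧
          Set.range j₁ ∩ Set.range j₂ = Set.range (j₁.comp i₁)

/-! Suppose the `≡`-class `B` of `a` is finite and contains some `b ≠ a`; put `A = B \ {b}`.
Strongly amalgamating two copies of `B` over `A` and realising the amalgam inside `M` by
ultrahomogeneity yields an automorphism `τ` of `M` fixing `A` pointwise and sending `b` outside
`B`. Since automorphisms preserve `≡` and `τ a = a`, `τ b` is a new element of the class of `a`,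
a contradiction. -/

section

variable {L : FirstOrder.Language.{u, u}} {M : Type u} [L.Structure M]

theorem AtomEquiv.refl (a : M) : AtomEquiv L M a a := fun _ _ _ _ => Iff.rfl

theorem AtomEquiv.map (τ : M ≃[L] M) {a b : M} (h : AtomEquiv L M a b) :
    AtomEquiv L M (τ a) (τ b) := by
  intro n φ hφ c
  have cons_eq : ∀ x : M, (Fin.cons (τ x) c : Fin (n + 1) → M) = τ ∘ Fin.cons x (τ.symm ∘ c) :=
    fun x => funext fun i => Fin.cases (by simp) (by simp) i
  rw [cons_eq a, cons_eq b, StrongHomClass.realize_formula, StrongHomClass.realize_formula]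
  exact h n φ hφ _

theorem exists_equiv_fixing_and_separating_of_strongAmalgamation
    (hhom : L.IsUltrahomogeneous M) (hSAP : StrongAmalgamation (L.age M))
    {A B : L.Substructure M} (hA : A.FG) (hB : B.FG) (hAB : A ≤ B) :
    ∃ τ : M ≃[L] M, (∀ x ∈ A, τ x = x) ∧ ∀ x ∈ B, τ x ∈ B → x ∈ A := by
  let i : CategoryTheory.Bundled.of (c := L.Structure) A ↪[L]
      CategoryTheory.Bundled.of (c := L.Structure) B :=
    Substructure.inclusion hAB
  obtain ⟨D, j₁, j₂, ⟨-, ⟨e⟩⟩, hcomp, hint⟩ :=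
    hSAP _ _ _ i i (age.fg_substructure hA) (age.fg_substructure hB) (age.fg_substructure hB)
  obtain ⟨g₁, hg₁⟩ := hhom B hB (e.comp j₁)
  obtain ⟨g₂, hg₂⟩ := hhom B hB (e.comp j₂)
  have hg₁_apply (x : B) : e (j₁ x) = g₁ x := DFunLike.congr_fun hg₁ x
  have hg₂_apply (x : B) : e (j₂ x) = g₂ x := DFunLike.congr_fun hg₂ x
  have hj (x : A) : j₁ (i x) = j₂ (i x) := DFunLike.congr_fun hcomp x
  refine ⟨g₁.symm.comp g₂, fun x hx => ?_, fun x hx hτx => ?_⟩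
  · have : g₁ x = g₂ x := by
      rw [← hg₁_apply ⟨x, hAB hx⟩, ← hg₂_apply ⟨x, hAB hx⟩]
      exact congrArg e (hj ⟨x, hx⟩)
    rw [Equiv.comp_apply, ← this, g₁.symm_apply_apply]
  · -- `j₁ (τ x) = j₂ x` lies in both images, hence in the image of the base `A`.
    have hj₁ : j₁ ⟨_, hτx⟩ = j₂ ⟨x, hx⟩ := e.injective <| by
      rw [hg₁_apply, hg₂_apply]
      exact g₁.apply_symm_apply (g₂ x)
    have hmem : j₂ ⟨x, hx⟩ ∈ range j₁ ∩ range j₂ := ⟨⟨_, hj₁⟩, ⟨_, rfl⟩⟩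
    rw [hint] at hmem
    obtain ⟨⟨y, hyA⟩, hy⟩ := hmem
    have hyx : y = x := congrArg Subtype.val (j₂.injective ((hj _).symm.trans hy))
    exact hyx ▸ hyA

end

theorem equiv_classes_singleton_or_infinite_general {L : FirstOrder.Language.{u, u}}
    [L.IsRelational]
    (K : Set (CategoryTheory.Bundled.{u} L.Structure))
    (hSAP : StrongAmalgamation K)
    (M : Type u) [L.Structure M]
    (hhom : L.IsUltrahomogeneous M) (hage : L.age M = K) :
    ∀ a : M, {b : M | AtomEquiv L M b a} = {a} ∨ {b : M | AtomEquiv L M b a}.Infinite := by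
  subst hage
  intro a
  refine (eq_singleton_or_nontrivial (AtomEquiv.refl a)).imp_right fun hE hfin => ?_
  obtain ⟨b, hb, hba⟩ := hE.exists_ne a
  obtain ⟨τ, hτ_fix, hτ_sep⟩ := exists_equiv_fixing_and_separating_of_strongAmalgamation hhom hSAP
    (Substructure.fg_closure (hfin.sdiff (t := {b}))) (Substructure.fg_closure hfin)
    (Substructure.closure_mono sdiff_subset)
  simp only [Substructure.mem_closure_iff_of_isRelational] at hτ_fix hτ_sep
  have hτa : τ a = a := hτ_fix a ⟨AtomEquiv.refl a, hba.symm⟩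
  have hτb : AtomEquiv L M (τ b) a := by simpa only [hτa] using hb.map τ
  exact (hτ_sep b hb hτb).2 rfl

/-- Let `K` be a nonempty strong Fraïssé class of finite structures in a
countable relational language, with countably many members up to isomorphism, and let `M` be
the countable ultrahomogeneous structure with age `K`. Then every `≡`-equivalence class of `M`
has exactly one element or is infinite. -/
theorem equiv_classes_singleton_or_infinite {L : FirstOrder.Language.{u, u}}
    [L.IsRelational] (hL : L.card ≤ ℵ₀)
    (K : Set (CategoryTheory.Bundled.{u} L.Structure))
    (hK : L.IsFraisse K)
    (hfin : ∀ A : CategoryTheory.Bundled.{u} L.Structure, A ∈ K → Finite A)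
    (hSAP : StrongAmalgamation K)
    (M : Type u) [L.Structure M] [Countable M]
    (hhom : L.IsUltrahomogeneous M) (hage : L.age M = K) :
    ∀ a : M, {b : M | AtomEquiv L M b a} = {a} ∨ {b : M | AtomEquiv L M b a}.Infinite :=
  equiv_classes_singleton_or_infinite_general K hSAP M hhom hage
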